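/- Proposition (SRI vs. symmetrized reference-invariant GE, case α < 1): for every real α with α < 1 and α ≠ 0, α·SR_α(p̄, q̄) ≥ α·SD_α(p̄, q̄), where p̄_j = p_j/Σ_k p_k, q̄_j = q_j/Σ_k q_k, and r̄_j = q̄_j/p̄_j. -/

import Mathlib

/-!
Write `A = Σ p̄ r̄^{1-α}` and `B = Σ p̄ r̄^α`. Multiplied by `α`, both indices carry the positive
factor `1/(1-α)`, and what remains is `1 - (A + B)/2 ≤ -(ln A + ln B)/2`, which is `ln x ≤ x - 1`
applied to `A` and to `B`.
-/

/-- Symmetrized Rényi index on the normalized distributions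
`p̄_j = p_j/Σ p`, `q̄_j = q_j/Σ q`, `r̄_j = q̄_j/p̄_j`:
`SR_α(p̄,q̄) = −(1/(2α(1−α)))·ln[(Σ_j p̄_j r̄_j^{1−α})·(Σ_j p̄_j r̄_j^{α})]`. -/
noncomputable def symRenyiBar (m : ℕ) (α : ℝ) (p q : Fin m → ℝ) : ℝ :=
  -(1 / (2 * α * (1 - α))) *
    Real.log
      ((∑ j, (p j / ∑ k, p k) * ((q j / ∑ k, q k) / (p j / ∑ k, p k)) ^ (1 - α)) *
       (∑ j, (p j / ∑ k, p k) * ((q j / ∑ k, q k) / (p j / ∑ k, p k)) ^ α))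

/-- Symmetrized reference-invariant GE index on the normalized distributions:
`SD_α(p̄,q̄) = (1/(α(1−α))) · [1 − (1/2) Σ_j p̄_j (r̄_j^{1−α} + r̄_j^{α})]`. -/
noncomputable def symGEBar (m : ℕ) (α : ℝ) (p q : Fin m → ℝ) : ℝ :=
  (1 / (α * (1 - α))) *
    (1 - (1 / 2) * ∑ j, (p j / ∑ k, p k) *
      (((q j / ∑ k, q k) / (p j / ∑ k, p k)) ^ (1 - α) +
       ((q j / ∑ k, q k) / (p j / ∑ k, p k)) ^ α))

theorem one_sub_half_add_le_neg_half_log_mul {a b : ℝ} (ha : 0 < a) (hb : 0 < b) :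
    1 - (a + b) / 2 ≤ -Real.log (a * b) / 2 := by
  rw [Real.log_mul ha.ne' hb.ne']
  linarith [Real.log_le_sub_one_of_pos ha, Real.log_le_sub_one_of_pos hb]

theorem sum_mul_rpow_pos {ι : Type*} [Fintype ι] [Nonempty ι] {w x : ι → ℝ}
    (hw : ∀ j, 0 < w j) (hx : ∀ j, 0 < x j) (s : ℝ) : 0 < ∑ j, w j * x j ^ s :=
  Finset.sum_pos (fun j _ => mul_pos (hw j) (Real.rpow_pos_of_pos (hx j) s)) Finset.univ_nonempty

theorem mul_symGE_le_mul_symRenyi {ι : Type*} [Fintype ι] [Nonempty ι] {w r : ι → ℝ}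
    (hw : ∀ j, 0 < w j) (hr : ∀ j, 0 < r j) {α : ℝ} (hα : α < 1) (hα0 : α ≠ 0) :
    α * (1 / (α * (1 - α)) * (1 - 1 / 2 * ∑ j, w j * (r j ^ (1 - α) + r j ^ α))) ≤
      α * (-(1 / (2 * α * (1 - α))) *
        Real.log ((∑ j, w j * r j ^ (1 - α)) * ∑ j, w j * r j ^ α)) := by
  set A := ∑ j, w j * r j ^ (1 - α)
  set B := ∑ j, w j * r j ^ α
  have hsplit : ∑ j, w j * (r j ^ (1 - α) + r j ^ α) = A + B := by
    simp only [A, B, mul_add, Finset.sum_add_distrib]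
  have h1α : 0 < 1 - α := sub_pos.2 hα
  have hGE : α * (1 / (α * (1 - α)) * (1 - 1 / 2 * (A + B))) = (1 - (A + B) / 2) / (1 - α) := by
    field_simp
  have hRenyi : α * (-(1 / (2 * α * (1 - α))) * Real.log (A * B)) =
      (-Real.log (A * B) / 2) / (1 - α) := by
    field_simp
  rw [hsplit, hGE, hRenyi]
  exact div_le_div_of_nonneg_right (one_sub_half_add_le_neg_half_log_mul
    (sum_mul_rpow_pos hw hr _) (sum_mul_rpow_pos hw hr _)) h1α.le

/-- SRI vs. symmetrized reference-invariant GE, case `α < 1`, `α ≠ 0`: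
`α·SR_α(p̄,q̄) ≥ α·SD_α(p̄,q̄)`. -/
theorem symRenyiBar_ge_symGEBar (m : ℕ) (hm : 1 ≤ m) (p q : Fin m → ℝ)
    (hp : ∀ j, 0 < p j) (hq : ∀ j, 0 < q j)
    (α : ℝ) (hα : α < 1) (hα0 : α ≠ 0) :
    α * symGEBar m α p q ≤ α * symRenyiBar m α p q := by
  have : Nonempty (Fin m) := ⟨⟨0, hm⟩⟩
  have hpn : ∀ j, 0 < p j / ∑ k, p k := fun j =>
    div_pos (hp j) (Finset.sum_pos (fun k _ => hp k) Finset.univ_nonempty)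
  have hqn : ∀ j, 0 < q j / ∑ k, q k := fun j =>
    div_pos (hq j) (Finset.sum_pos (fun k _ => hq k) Finset.univ_nonempty)
  exact mul_symGE_le_mul_symRenyi hpn (fun j => div_pos (hqn j) (hpn j)) hα hα0
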